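/- Let L ≥ 1, let U_1,...,U_L ⊆ {1,...,s} be arbitrary (possibly overlapping) sets, let t = (t_1,...,t_L) be nonnegative integers, and let H_t⟨U⟩ = H_{t_1}⟨U_1⟩ ▸ ⋯ ▸ H_{t_L}⟨U_L⟩. Define the adversarial strength σ_t⟨U⟩ as the maximum of |⋃_{ℓ=1}^L (U_ℓ^{(1)} ∪ U_ℓ^{(2)})| over all choices of subsets U_ℓ^{(1)}, U_ℓ^{(2)} ⊆ U_ℓ with |U_ℓ^{(1)}| ≤ t_ℓ and |U_ℓ^{(2)}| ≤ t_ℓ for all ℓ. Then for every integer n ≥ 1: n·C(H_t⟨U⟩) ≤ C(H_t⟨U⟩^n) ≤ C(H_t⟨U⟩^{n,rest}) ≤ n·(s − σ_t⟨U⟩); in particular C(H_t⟨U⟩) ≤ C0(H_t⟨U⟩) ≤ C0_rest(H_t⟨U⟩) ≤ s − σ_t⟨U⟩. Moreover, there exists q0 such that for every finite field F_q with q ≥ q0, taking A = F_q, all of these inequalities are equalities. -/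

import Mathlib

open Set

/-- A code `C` is good for the channel `Ω` if it is nonempty and the fan-out sets of
distinct codewords are disjoint. -/
def IsGoodCode {X Y : Type*} (Ω : X → Set Y) (C : Finset X) : Prop :=
  C.Nonempty ∧ ∀ x ∈ C, ∀ x' ∈ C, x ≠ x' → Ω x ∩ Ω x' = ∅

/-- The largest cardinality of a good code for `Ω`. -/
noncomputable def maxGoodCode {X Y : Type*} [Fintype X] (Ω : X → Set Y) : ℕ :=
  sSup {n : ℕ | ∃ C : Finset X, IsGoodCode Ω C ∧ C.card = n}

/-- The one-shot capacity of a channel (base-2 logarithm). -/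
noncomputable def oneShotCap {X Y : Type*} [Fintype X] (Ω : X → Set Y) : ℝ :=
  Real.logb 2 (maxGoodCode Ω)

/-- The product of two channels. -/
def chProd {X1 Y1 X2 Y2 : Type*} (Ω1 : X1 → Set Y1) (Ω2 : X2 → Set Y2) :
    X1 × X2 → Set (Y1 × Y2) :=
  fun p => Ω1 p.1 ×ˢ Ω2 p.2

/-- The `n`-th power of a channel. -/
def chPow {X Y : Type*} (Ω : X → Set Y) (n : ℕ) :
    (Fin n → X) → Set (Fin n → Y) :=
  fun x => Set.univ.pi fun k => Ω (x k)

/-- The zero-error capacity of a channel: `sup { C(Ω^n)/n : n ≥ 1 }` (base 2). -/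
noncomputable def zeroErrorCap {X Y : Type*} [Fintype X] (Ω : X → Set Y) : ℝ :=
  sSup {r : ℝ | ∃ n : ℕ, 1 ≤ n ∧ r = oneShotCap (chPow Ω n) / n}

/-- Concatenation of channels: `(Ω1 ▸ Ω2)(x) = ⋃_{y ∈ Ω1(x)} Ω2(y)`. -/
def chConcat {X Y Z : Type*} (Ω1 : X → Set Y) (Ω2 : Y → Set Z) : X → Set Z :=
  fun x => ⋃ y ∈ Ω1 x, Ω2 y

/-- Union of a family of channels with the same alphabets. -/
def chUnion {I X Y : Type*} (Ω : I → X → Set Y) : X → Set Y :=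
  fun x => ⋃ i, Ω i x

/-- Channels are isomorphic if there is a bijection of input alphabets preserving the
adjacency function (i.e. preserving nonemptiness of pairwise intersections of fan-out sets). -/
def ChIso {X1 Y1 X2 Y2 : Type*} (Ω1 : X1 → Set Y1) (Ω2 : X2 → Set Y2) : Prop :=
  ∃ f : X1 ≃ X2, ∀ x x' : X1,
    ((Ω1 x ∩ Ω1 x').Nonempty ↔ (Ω2 (f x) ∩ Ω2 (f x')).Nonempty)

/-- One-shot capacity expressed as a logarithm in base `q`. -/
noncomputable def capBase {X Y : Type*} [Fintype X] (q : ℕ) (Ω : X → Set Y) : ℝ :=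
  Real.logb q (maxGoodCode Ω)

/-- Zero-error capacity expressed as a logarithm in base `q`. -/
noncomputable def zeroCapBase {X Y : Type*} [Fintype X] (q : ℕ) (Ω : X → Set Y) : ℝ :=
  sSup {r : ℝ | ∃ n : ℕ, 1 ≤ n ∧ r = capBase q (chPow Ω n) / n}

/-- The product of a finite family of channels. -/
def chPi {n : ℕ} {X Y : Fin n → Type*} (Ω : ∀ k, X k → Set (Y k)) :
    (∀ k, X k) → Set (∀ k, Y k) :=
  fun x => Set.univ.pi fun k => Ω k (x k)

/-- The `m`-fold concatenation `Ψ 0 ▸ Ψ 1 ▸ ⋯ ▸ Ψ (m-1)` of a chain of channels. -/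
def chChain {Z : ℕ → Type*} (Ψ : ∀ i, Z i → Set (Z (i + 1))) : ∀ m, Z 0 → Set (Z m)
  | 0 => fun x => {x}
  | m + 1 => chConcat (chChain Ψ m) (Ψ m)

/-- Concatenation of a list of channels on a fixed alphabet. -/
def chainList {W : Type*} : List (W → Set W) → (W → Set W)
  | [] => fun x => {x}
  | Ω :: rest => chConcat Ω (chainList rest)

/-- The error-only Hamming channel `H_t⟨U⟩ : A^s ⇝ A^s`. -/
def HE {A : Type*} [DecidableEq A] {s : ℕ} (t : ℕ) (U : Finset (Fin s)) :
    (Fin s → A) → Set (Fin s → A) :=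
  fun x => {y | (∀ i, i ∉ U → y i = x i) ∧ (U.filter fun i => y i ≠ x i).card ≤ t}

/-- The concatenation `H_{t 0}⟨U 0⟩ ▸ ⋯ ▸ H_{t (L-1)}⟨U (L-1)⟩`. -/
def HT {A : Type*} [DecidableEq A] {s L : ℕ} (t : Fin L → ℕ)
    (U : Fin L → Finset (Fin s)) :
    (Fin s → A) → Set (Fin s → A) :=
  chainList (List.ofFn fun ℓ => HE (t ℓ) (U ℓ))

/-- The adversarial strength `σ_t⟨U⟩`. -/
noncomputable def advStrength {s L : ℕ} (t : Fin L → ℕ)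
    (U : Fin L → Finset (Fin s)) : ℕ :=
  sSup {σ : ℕ | ∃ V W : Fin L → Finset (Fin s),
    (∀ ℓ, V ℓ ⊆ U ℓ ∧ W ℓ ⊆ U ℓ ∧ (V ℓ).card ≤ t ℓ ∧ (W ℓ).card ≤ t ℓ) ∧
    σ = (Finset.univ.biUnion fun ℓ => V ℓ ∪ W ℓ).card}

/-- The compound channel `H_t⟨U⟩^{n,rest}`. -/
def HTcomp {A : Type*} [DecidableEq A] {s L : ℕ} (t : Fin L → ℕ)
    (U : Fin L → Finset (Fin s)) (n : ℕ) :
    (Fin n → Fin s → A) → Set (Fin n → Fin s → A) :=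
  fun x => ⋃ (V : Fin L → Finset (Fin s))
      (_ : ∀ ℓ, V ℓ ⊆ U ℓ ∧ (V ℓ).card ≤ t ℓ),
    chPow (HT t V) n x

/-- The compound zero-error capacity of `H_t⟨U⟩`, base `q`. -/
noncomputable def HTcompCap (A : Type*) [Fintype A] [DecidableEq A] {s L : ℕ}
    (q : ℕ) (t : Fin L → ℕ) (U : Fin L → Finset (Fin s)) : ℝ :=
  sSup {r : ℝ | ∃ n : ℕ, 1 ≤ n ∧ r = capBase q (HTcomp (A := A) t U n) / n}


section Aux
set_option linter.unusedSectionVars false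
set_option linter.unusedVariables false
set_option maxHeartbeats 1000000

section Basic
variable {X Y : Type*} [Fintype X]

lemma goodSet_bddAbove (Ω : X → Set Y) :
    BddAbove {n : ℕ | ∃ C : Finset X, IsGoodCode Ω C ∧ C.card = n} := by
  refine ⟨Fintype.card X, fun n hn => ?_⟩
  obtain ⟨C, _, rfl⟩ := hn
  exact Finset.card_le_univ C

lemma goodSet_nonempty [Nonempty X] (Ω : X → Set Y) :
    {n : ℕ | ∃ C : Finset X, IsGoodCode Ω C ∧ C.card = n}.Nonempty := by
  refine ⟨1, {Classical.arbitrary X}, ⟨⟨_, Finset.mem_singleton_self _⟩, ?_⟩, Finset.card_singleton _⟩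
  intro x hx x' hx' hne
  simp only [Finset.mem_singleton] at hx hx'
  exact absurd (hx.trans hx'.symm) hne

lemma le_maxGoodCode {Ω : X → Set Y} {C : Finset X} (h : IsGoodCode Ω C) :
    C.card ≤ maxGoodCode Ω :=
  le_csSup (goodSet_bddAbove Ω) ⟨C, h, rfl⟩

lemma singleton_good (Ω : X → Set Y) (x : X) : IsGoodCode Ω {x} := by
  refine ⟨⟨x, Finset.mem_singleton_self _⟩, fun a ha b hb hne => ?_⟩
  simp only [Finset.mem_singleton] at ha hb
  exact absurd (ha.trans hb.symm) hne

lemma one_le_maxGoodCode [Nonempty X] (Ω : X → Set Y) : 1 ≤ maxGoodCode Ω := by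
  simpa using le_maxGoodCode (singleton_good Ω (Classical.arbitrary X))

lemma maxGoodCode_le [Nonempty X] {Ω : X → Set Y} {m : ℕ}
    (h : ∀ C : Finset X, IsGoodCode Ω C → C.card ≤ m) : maxGoodCode Ω ≤ m := by
  refine csSup_le ⟨1, {Classical.arbitrary X}, singleton_good _ _, Finset.card_singleton _⟩ ?_
  rintro n ⟨C, hC, rfl⟩
  exact h C hC

lemma maxGoodCode_mono [Nonempty X] {Ω Ω' : X → Set Y} (h : ∀ x, Ω' x ⊆ Ω x) :
    maxGoodCode Ω ≤ maxGoodCode Ω' := by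
  have hmem := Nat.sSup_mem (goodSet_nonempty Ω) (goodSet_bddAbove Ω)
  obtain ⟨C, hC, hcard⟩ := hmem
  rw [maxGoodCode, ← hcard]
  refine le_maxGoodCode ⟨hC.1, fun x hx x' hx' hne => ?_⟩
  rw [← Set.subset_empty_iff, ← hC.2 x hx x' hx' hne]
  exact Set.inter_subset_inter (h x) (h x')

lemma pow_le_maxGoodCode_chPow [Nonempty X] (Ω : X → Set Y) (n : ℕ) :
    (maxGoodCode Ω) ^ n ≤ maxGoodCode (chPow Ω n) := by
  obtain ⟨C, hC, hcard⟩ := Nat.sSup_mem (goodSet_nonempty Ω) (goodSet_bddAbove Ω)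
  rw [maxGoodCode, ← hcard] at *
  have : IsGoodCode (chPow Ω n) (Fintype.piFinset fun _ : Fin n => C) := by
    constructor
    · obtain ⟨c, hc⟩ := hC.1
      exact ⟨fun _ => c, by simp [Fintype.mem_piFinset, hc]⟩
    · intro f hf g hg hne
      rw [Set.eq_empty_iff_forall_notMem]
      intro y hy
      obtain ⟨k, hk⟩ : ∃ k, f k ≠ g k := by
        by_contra hall
        push_neg at hall
        exact hne (funext hall)
      simp only [Set.mem_inter_iff, chPow, Set.mem_pi, Set.mem_univ, forall_true_left] at hy
      have h1 := hy.1 k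
      have h2 := hy.2 k
      have := hC.2 (f k) (Fintype.mem_piFinset.1 hf k) (g k) (Fintype.mem_piFinset.1 hg k) hk
      rw [Set.eq_empty_iff_forall_notMem] at this
      exact this (y k) ⟨h1, h2⟩
  have hle := le_maxGoodCode this
  rwa [Fintype.card_piFinset, Finset.prod_const, Finset.card_univ, Fintype.card_fin] at hle


end Basic

variable {A : Type*} [Fintype A] [DecidableEq A] {s L : ℕ}

/-- Admissibility of an error-position selection. -/
def Adm {L : ℕ} (t : Fin L → ℕ) (U V : Fin L → Finset (Fin s)) : Prop :=
  ∀ ℓ, V ℓ ⊆ U ℓ ∧ (V ℓ).card ≤ t ℓ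

lemma HT_succ {L : ℕ} (t : Fin (L+1) → ℕ) (U : Fin (L+1) → Finset (Fin s)) :
    HT (A := A) t U = chConcat (HE (t 0) (U 0))
      (HT (fun ℓ => t ℓ.succ) (fun ℓ => U ℓ.succ)) := by
  simp only [HT, List.ofFn_succ, chainList]

lemma mem_HT_iff : ∀ {L : ℕ} (t : Fin L → ℕ) (U : Fin L → Finset (Fin s))
    (x y : Fin s → A), y ∈ HT t U x ↔ ∃ V : Fin L → Finset (Fin s), Adm t U V ∧
      ∀ i, i ∉ Finset.univ.biUnion V → y i = x i := by
  intro L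
  induction L with
  | zero =>
    intro t U x y
    constructor
    · rintro h
      refine ⟨finZeroElim, finZeroElim, fun i _ => ?_⟩
      have : y = x := by simpa [HT, chainList] using h
      rw [this]
    · rintro ⟨V, _, h⟩
      have : y = x := funext fun i => h i (by simp)
      simp [HT, chainList, this]
  | succ L ih =>
    intro t U x y
    rw [HT_succ]
    constructor
    · rintro h
      simp only [chConcat, Set.mem_iUnion] at h
      obtain ⟨z, hz, hy⟩ := h
      obtain ⟨V', hV'adm, hV'⟩ := (ih _ _ z y).1 hy
      refine ⟨Fin.cons ((U 0).filter fun i => z i ≠ x i) V', ?_, ?_⟩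
      · intro ℓ
        refine Fin.cases ?_ (fun j => ?_) ℓ
        · simp only [Fin.cons_zero]
          exact ⟨Finset.filter_subset _ _, hz.2⟩
        · simp only [Fin.cons_succ]
          exact hV'adm j
      · intro i hi
        have hi0 : i ∉ (U 0).filter fun j => z j ≠ x j := by
          intro hc
          exact hi (Finset.mem_biUnion.2 ⟨0, Finset.mem_univ _, by simpa using hc⟩)
        have hzx : z i = x i := by
          by_cases hU : i ∈ U 0
          · by_contra hne
            exact hi0 (Finset.mem_filter.2 ⟨hU, hne⟩)
          · exact hz.1 i hU
        have hyz : y i = z i := by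
          refine hV' i fun hc => ?_
          obtain ⟨j, _, hj⟩ := Finset.mem_biUnion.1 hc
          exact hi (Finset.mem_biUnion.2 ⟨j.succ, Finset.mem_univ _, by simpa using hj⟩)
        rw [hyz, hzx]
    · rintro ⟨V, hadm, h⟩
      simp only [chConcat, Set.mem_iUnion]
      set z : Fin s → A := fun i => if i ∈ V 0 then y i else x i with hzdef
      refine ⟨z, ⟨?_, ?_⟩, ?_⟩
      · intro i hU
        have : i ∉ V 0 := fun hc => hU ((hadm 0).1 hc)
        simp [hzdef, this]
      · calc ((U 0).filter fun i => z i ≠ x i).card ≤ (V 0).card := by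
              refine Finset.card_le_card fun i hi => ?_
              obtain ⟨-, hne⟩ := Finset.mem_filter.1 hi
              by_contra hc
              exact hne (by simp [hzdef, hc])
            _ ≤ t 0 := (hadm 0).2
      · refine (ih _ _ z y).2 ⟨fun ℓ => V ℓ.succ, fun ℓ => hadm ℓ.succ, ?_⟩
        intro i hi
        by_cases h0 : i ∈ V 0
        · simp [hzdef, h0]
        · have : i ∉ Finset.univ.biUnion V := by
            intro hc
            obtain ⟨j, _, hj⟩ := Finset.mem_biUnion.1 hc
            refine Fin.cases (fun h => h0 h) (fun j' hj' => hi (Finset.mem_biUnion.2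
              ⟨j', Finset.mem_univ _, hj'⟩)) j hj
          simp [hzdef, h0, h i this]

lemma HT_mono {t : Fin L → ℕ} {U V : Fin L → Finset (Fin s)} (h : Adm t U V)
    (x : Fin s → A) : HT t V x ⊆ HT t U x := by
  intro y hy
  obtain ⟨V', hadm, hV'⟩ := (mem_HT_iff _ _ x y).1 hy
  exact (mem_HT_iff _ _ x y).2 ⟨V', fun ℓ => ⟨(hadm ℓ).1.trans (h ℓ).1, (hadm ℓ).2⟩, hV'⟩

/-- Joint reachability when two inputs agree outside Σ(V,W). -/
lemma HT_common_output {t : Fin L → ℕ} {V W : Fin L → Finset (Fin s)}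
    (hV : ∀ ℓ, (V ℓ).card ≤ t ℓ) (hW : ∀ ℓ, (W ℓ).card ≤ t ℓ)
    {x x' : Fin s → A}
    (hagree : ∀ i, i ∉ (Finset.univ.biUnion fun ℓ => V ℓ ∪ W ℓ) → x i = x' i) :
    ∃ y, y ∈ HT t V x ∧ y ∈ HT t W x' := by
  refine ⟨fun i => if i ∈ Finset.univ.biUnion V then x' i else x i, ?_, ?_⟩
  · refine (mem_HT_iff _ _ _ _).2 ⟨V, fun ℓ => ⟨Finset.Subset.refl _, hV ℓ⟩, fun i hi => ?_⟩
    simp [hi]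
  · refine (mem_HT_iff _ _ _ _).2 ⟨W, fun ℓ => ⟨Finset.Subset.refl _, hW ℓ⟩, fun i hi => ?_⟩
    by_cases hv : i ∈ Finset.univ.biUnion V
    · simp [hv]
    · have : i ∉ (Finset.univ.biUnion fun ℓ => V ℓ ∪ W ℓ) := by
        intro hc
        obtain ⟨j, -, hj⟩ := Finset.mem_biUnion.1 hc
        rcases Finset.mem_union.1 hj with h1 | h2
        · exact hv (Finset.mem_biUnion.2 ⟨j, Finset.mem_univ _, h1⟩)
        · exact hi (Finset.mem_biUnion.2 ⟨j, Finset.mem_univ _, h2⟩)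
      simp [hv, hagree i this]

section Adv
variable (t : Fin L → ℕ) (U : Fin L → Finset (Fin s))

lemma advSet_nonempty : {σ : ℕ | ∃ V W : Fin L → Finset (Fin s),
    (∀ ℓ, V ℓ ⊆ U ℓ ∧ W ℓ ⊆ U ℓ ∧ (V ℓ).card ≤ t ℓ ∧ (W ℓ).card ≤ t ℓ) ∧
    σ = (Finset.univ.biUnion fun ℓ => V ℓ ∪ W ℓ).card}.Nonempty := by
  refine ⟨_, fun _ => ∅, fun _ => ∅, fun ℓ => ?_, rfl⟩
  simp

lemma advSet_bddAbove : BddAbove {σ : ℕ | ∃ V W : Fin L → Finset (Fin s),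
    (∀ ℓ, V ℓ ⊆ U ℓ ∧ W ℓ ⊆ U ℓ ∧ (V ℓ).card ≤ t ℓ ∧ (W ℓ).card ≤ t ℓ) ∧
    σ = (Finset.univ.biUnion fun ℓ => V ℓ ∪ W ℓ).card} := by
  refine ⟨s, ?_⟩
  rintro σ ⟨V, W, -, rfl⟩
  simpa using Finset.card_le_univ (Finset.univ.biUnion fun ℓ => V ℓ ∪ W ℓ)

lemma advStrength_le : advStrength t U ≤ s :=
  csSup_le (advSet_nonempty t U) (by
    rintro σ ⟨V, W, -, rfl⟩
    simpa using Finset.card_le_univ (Finset.univ.biUnion fun ℓ => V ℓ ∪ W ℓ))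

lemma advStrength_spec : ∃ V W : Fin L → Finset (Fin s),
    (∀ ℓ, V ℓ ⊆ U ℓ ∧ W ℓ ⊆ U ℓ ∧ (V ℓ).card ≤ t ℓ ∧ (W ℓ).card ≤ t ℓ) ∧
    advStrength t U = (Finset.univ.biUnion fun ℓ => V ℓ ∪ W ℓ).card :=
  Nat.sSup_mem (advSet_nonempty t U) (advSet_bddAbove t U)

lemma card_le_advStrength {V W : Fin L → Finset (Fin s)}
    (hV : Adm t U V) (hW : Adm t U W) :
    (Finset.univ.biUnion fun ℓ => V ℓ ∪ W ℓ).card ≤ advStrength t U :=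
  le_csSup (advSet_bddAbove t U)
    ⟨V, W, fun ℓ => ⟨(hV ℓ).1, (hW ℓ).1, (hV ℓ).2, (hW ℓ).2⟩, rfl⟩
end Adv

/-- The counting bound for the compound channel. -/
lemma goodCode_HTcomp_card_le [Fintype A] (t : Fin L → ℕ) (U : Fin L → Finset (Fin s))
    (n : ℕ) {C : Finset (Fin n → Fin s → A)} (hC : IsGoodCode (HTcomp t U n) C) :
    C.card ≤ (Fintype.card A) ^ (n * (s - advStrength t U)) := by
  obtain ⟨V, W, hVW, hσ⟩ := advStrength_spec t U
  set Sm : Finset (Fin s) := Finset.univ.biUnion fun ℓ => V ℓ ∪ W ℓ with hSm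
  have key : ∀ x ∈ C, ∀ x' ∈ C,
      (∀ k : Fin n, ∀ i : Fin s, i ∉ Sm → x k i = x' k i) → x = x' := by
    intro x hx x' hx' hagree
    by_contra hne
    have hdisj := hC.2 x hx x' hx' hne
    have hy : ∀ k : Fin n, ∃ y, y ∈ HT t V (x k) ∧ y ∈ HT t W (x' k) := fun k =>
      HT_common_output (fun ℓ => (hVW ℓ).2.2.1) (fun ℓ => (hVW ℓ).2.2.2)
        (fun i hi => hagree k i hi)
    choose y hy1 hy2 using hy
    have hmem1 : y ∈ HTcomp t U n x := by
      refine Set.mem_iUnion.2 ⟨V, Set.mem_iUnion.2 ⟨fun ℓ => ⟨(hVW ℓ).1, (hVW ℓ).2.2.1⟩, ?_⟩⟩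
      exact fun k _ => hy1 k
    have hmem2 : y ∈ HTcomp t U n x' := by
      refine Set.mem_iUnion.2 ⟨W, Set.mem_iUnion.2 ⟨fun ℓ => ⟨(hVW ℓ).2.1, (hVW ℓ).2.2.2⟩, ?_⟩⟩
      exact fun k _ => hy2 k
    rw [Set.eq_empty_iff_forall_notMem] at hdisj
    exact hdisj y ⟨hmem1, hmem2⟩
  -- injection into restrictions
  classical
  have hinj : Set.InjOn (fun (x : Fin n → Fin s → A) => fun (k : Fin n)
      (i : {i : Fin s // i ∉ Sm}) => x k i.1) C := by
    intro x hx x' hx' heq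
    refine key x hx x' hx' fun k i hi => ?_
    exact congrFun (congrFun heq k) ⟨i, hi⟩
  have hcard := Finset.card_le_card_of_injOn _ (fun a _ => Finset.mem_univ _) hinj
  rw [Finset.card_univ] at hcard
  have hsub : Fintype.card {i : Fin s // i ∉ Sm} = s - advStrength t U := by
    rw [Fintype.card_subtype_compl]
    simp [hσ, Fintype.card_coe]
  calc C.card ≤ Fintype.card (Fin n → {i : Fin s // i ∉ Sm} → A) := hcard
    _ = (Fintype.card A) ^ (n * (s - advStrength t U)) := by
        simp only [Fintype.card_fun, Fintype.card_fin, hsub]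
        rw [← pow_mul, mul_comm]

open Polynomial in
/-- A Reed-Solomon style good code of size `q ^ (s - σ)` for `HT t U`, over any
field with at least `s` elements. -/
lemma exists_good_code_HT (F : Type) [Field F] [Fintype F] [DecidableEq F]
    {s L : ℕ} (t : Fin L → ℕ) (U : Fin L → Finset (Fin s))
    (hsF : s ≤ Fintype.card F) :
    ∃ C : Finset (Fin s → F), IsGoodCode (HT t U) C ∧
      C.card = (Fintype.card F) ^ (s - advStrength t U) := by
  classical
  obtain ⟨α⟩ : Nonempty (Fin s ↪ F) :=
    Function.Embedding.nonempty_of_card_le (by simpa using hsF)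
  set σ := advStrength t U with hσ
  set k := s - σ with hk
  set E : (Fin k → F) → (Fin s → F) := fun c i => ∑ j : Fin k, c j * α i ^ (j : ℕ)
    with hE
  -- distance property
  have hdist : ∀ c c' : Fin k → F, c ≠ c' →
      σ < (Finset.univ.filter fun i => E c i ≠ E c' i).card := by
    intro c c' hne
    obtain ⟨j₀, hj₀⟩ : ∃ j, c j - c' j ≠ 0 := by
      by_contra hall
      push_neg at hall
      exact hne (funext fun j => sub_eq_zero.1 (hall j))
    have hk1 : 1 ≤ k := by
      have := j₀.2
      omega
    set p : F[X] := ∑ j : Fin k, C (c j - c' j) * X ^ (j : ℕ) with hp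
    have hterm : ∀ j : Fin k, ((C (c j - c' j)) * X ^ (j : ℕ)).coeff (j₀ : ℕ)
        = if j = j₀ then c j₀ - c' j₀ else 0 := by
      intro j
      rw [coeff_C_mul, coeff_X_pow]
      by_cases h : j = j₀
      · subst h; simp
      · have hne' : ¬((j₀ : ℕ) = (j : ℕ)) := fun hh => h (Fin.ext hh).symm
        simp [h, hne']
    have hcoeff : p.coeff (j₀ : ℕ) = c j₀ - c' j₀ := by
      rw [hp, finset_sum_coeff]
      simp only [hterm]
      simp
    have hp0 : p ≠ 0 := fun h => hj₀ (by simpa [h] using hcoeff.symm)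
    have hdeg : p.natDegree ≤ k - 1 := by
      refine natDegree_sum_le_of_forall_le _ _ fun j _ => ?_
      refine (natDegree_C_mul_le _ _).trans ?_
      simpa using Nat.le_sub_one_of_lt j.2
    have heval : ∀ i : Fin s, p.eval (α i) = E c i - E c' i := by
      intro i
      simp only [hp, eval_finset_sum, eval_mul, eval_C, eval_pow, eval_X, hE]
      rw [← Finset.sum_sub_distrib]
      congr 1
      ext j
      ring
    have hagree : (Finset.univ.filter fun i => E c i = E c' i).card ≤ k - 1 := by
      have hsubset : ∀ i ∈ (Finset.univ.filter fun i => E c i = E c' i),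
          α i ∈ p.roots.toFinset := by
        intro i hi
        rw [Multiset.mem_toFinset, mem_roots hp0]
        have := (Finset.mem_filter.1 hi).2
        simp [IsRoot, heval i, sub_eq_zero.2 this]
      calc (Finset.univ.filter fun i => E c i = E c' i).card
          ≤ p.roots.toFinset.card :=
            Finset.card_le_card_of_injOn α hsubset (α.injective.injOn)
        _ ≤ Multiset.card p.roots := Multiset.toFinset_card_le _
        _ ≤ p.natDegree := p.card_roots'
        _ ≤ k - 1 := hdeg
    have hsplit := Finset.card_filter_add_card_filter_not
      (s := (Finset.univ : Finset (Fin s))) (fun i => E c i = E c' i)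
    rw [Finset.card_univ, Fintype.card_fin] at hsplit
    have hσs : σ ≤ s := advStrength_le t U
    have hrw : (Finset.univ.filter fun i => E c i ≠ E c' i).card
        = (Finset.univ.filter fun a => ¬ E c a = E c' a).card := rfl
    rw [hrw]
    omega
  have hEinj : Function.Injective E := by
    intro c c' h
    by_contra hne
    have := hdist c c' hne
    simp [h] at this
  refine ⟨Finset.image E Finset.univ, ⟨?_, ?_⟩, ?_⟩
  · exact ⟨E (fun _ => 0), Finset.mem_image.2 ⟨_, Finset.mem_univ _, rfl⟩⟩
  · intro x hx x' hx' hne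
    obtain ⟨c, -, rfl⟩ := Finset.mem_image.1 hx
    obtain ⟨c', -, rfl⟩ := Finset.mem_image.1 hx'
    rw [Set.eq_empty_iff_forall_notMem]
    rintro y ⟨hy1, hy2⟩
    obtain ⟨V, hVadm, hV⟩ := (mem_HT_iff _ _ _ _).1 hy1
    obtain ⟨W, hWadm, hW⟩ := (mem_HT_iff _ _ _ _).1 hy2
    have hcc' : c ≠ c' := fun h => hne (by rw [h])
    have hsub : (Finset.univ.filter fun i => E c i ≠ E c' i) ⊆
        Finset.univ.biUnion fun ℓ => V ℓ ∪ W ℓ := by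
      intro i hi
      by_contra hc
      have hiV : i ∉ Finset.univ.biUnion V := by
        intro h
        obtain ⟨j, _, hj⟩ := Finset.mem_biUnion.1 h
        exact hc (Finset.mem_biUnion.2 ⟨j, Finset.mem_univ _, Finset.mem_union_left _ hj⟩)
      have hiW : i ∉ Finset.univ.biUnion W := by
        intro h
        obtain ⟨j, _, hj⟩ := Finset.mem_biUnion.1 h
        exact hc (Finset.mem_biUnion.2 ⟨j, Finset.mem_univ _, Finset.mem_union_right _ hj⟩)
      exact (Finset.mem_filter.1 hi).2 ((hV i hiV).symm.trans (hW i hiW))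
    have h1 := Finset.card_le_card hsub
    have h2 := card_le_advStrength t U hVadm hWadm
    have h3 := hdist c c' hcc'
    omega
  · rw [Finset.card_image_of_injective _ hEinj, Finset.card_univ]
    simp [Fintype.card_fun]

lemma nonemptyA (hA : 2 ≤ Fintype.card A) : Nonempty A :=
  Fintype.card_pos_iff.1 (by omega)

lemma oneltq (hA : 2 ≤ Fintype.card A) : (1 : ℝ) < (Fintype.card A : ℝ) := by
  exact_mod_cast hA

/-- The chain of three inequalities, for each n and base q = |A|. -/
lemma chain_bounds (hA : 2 ≤ Fintype.card A)
    (U : Fin L → Finset (Fin s)) (t : Fin L → ℕ) (n : ℕ) (hn : 1 ≤ n) :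
    (n : ℝ) * capBase (Fintype.card A) (HT (A := A) t U)
        ≤ capBase (Fintype.card A) (chPow (HT (A := A) t U) n) ∧
    capBase (Fintype.card A) (chPow (HT (A := A) t U) n)
        ≤ capBase (Fintype.card A) (HTcomp (A := A) t U n) ∧
    capBase (Fintype.card A) (HTcomp (A := A) t U n)
        ≤ (n : ℝ) * ((s : ℝ) - (advStrength t U : ℝ)) := by
  have hq : (1 : ℝ) < (Fintype.card A : ℝ) := oneltq hA
  have : Nonempty A := nonemptyA hA
  set q : ℕ := Fintype.card A
  set σ : ℕ := advStrength t U with hσdef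
  have hσs : σ ≤ s := advStrength_le t U
  have hM1 : 1 ≤ maxGoodCode (HT (A := A) t U) := one_le_maxGoodCode _
  have hMn1 : 1 ≤ maxGoodCode (chPow (HT (A := A) t U) n) := one_le_maxGoodCode _
  have hcomp1 : 1 ≤ maxGoodCode (HTcomp (A := A) t U n) := one_le_maxGoodCode _
  refine ⟨?_, ?_, ?_⟩
  · -- product bound
    have h := pow_le_maxGoodCode_chPow (HT (A := A) t U) n
    have hcast : ((maxGoodCode (HT (A := A) t U) : ℝ)) ^ n
        ≤ (maxGoodCode (chPow (HT (A := A) t U) n) : ℝ) := by exact_mod_cast h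
    have := Real.logb_le_logb_of_le hq
      (by positivity) hcast
    rwa [Real.logb_pow] at this
  · -- mono bound
    have hsub : ∀ x, HTcomp (A := A) t U n x ⊆ chPow (HT (A := A) t U) n x := by
      intro x y hy
      simp only [HTcomp, Set.mem_iUnion] at hy
      obtain ⟨V, hadm, hmem⟩ := hy
      intro k hk
      exact HT_mono hadm (x k) (hmem k hk)
    have h := maxGoodCode_mono hsub
    exact Real.logb_le_logb_of_le hq (by exact_mod_cast hMn1) (by exact_mod_cast h)
  · -- counting bound
    have h : maxGoodCode (HTcomp (A := A) t U n) ≤ (Fintype.card A) ^ (n * (s - σ)) :=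
      maxGoodCode_le fun C hC => goodCode_HTcomp_card_le t U n hC
    have h2 := Real.logb_le_logb_of_le hq
      (x := (maxGoodCode (HTcomp (A := A) t U n) : ℝ))
      (y := ((q ^ (n * (s - σ)) : ℕ) : ℝ))
      (by exact_mod_cast hcomp1) (by exact_mod_cast h)
    calc capBase q (HTcomp (A := A) t U n)
        ≤ Real.logb q ((q : ℝ) ^ (n * (s - σ))) := by
          rw [show ((q : ℝ) ^ (n * (s - σ))) = ((q ^ (n * (s - σ)) : ℕ) : ℝ) by push_cast; ring]
          exact h2
      _ = (n : ℝ) * ((s : ℝ) - (σ : ℝ)) := by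
          rw [Real.logb_pow, Real.logb_self_eq_one hq]
          push_cast [Nat.cast_sub hσs]
          ring

lemma S1_nonempty (q : ℕ) (U : Fin L → Finset (Fin s)) (t : Fin L → ℕ) :
    {r : ℝ | ∃ n : ℕ, 1 ≤ n ∧ r = capBase q (chPow (HT (A := A) t U) n) / n}.Nonempty :=
  ⟨_, 1, le_refl 1, rfl⟩

lemma S2_nonempty (q : ℕ) (U : Fin L → Finset (Fin s)) (t : Fin L → ℕ) :
    {r : ℝ | ∃ n : ℕ, 1 ≤ n ∧ r = capBase q (HTcomp (A := A) t U n) / n}.Nonempty :=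
  ⟨_, 1, le_refl 1, rfl⟩

lemma S1_bdd (hA : 2 ≤ Fintype.card A) (U : Fin L → Finset (Fin s)) (t : Fin L → ℕ) :
    ∀ r ∈ {r : ℝ | ∃ n : ℕ, 1 ≤ n ∧
      r = capBase (Fintype.card A) (chPow (HT (A := A) t U) n) / n},
      r ≤ (s : ℝ) - (advStrength t U : ℝ) := by
  rintro r ⟨n, hn, rfl⟩
  have hn0 : (0 : ℝ) < n := by exact_mod_cast hn
  obtain ⟨-, h2, h3⟩ := chain_bounds hA U t n hn
  rw [div_le_iff₀ hn0]
  nlinarith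

lemma S2_bdd (hA : 2 ≤ Fintype.card A) (U : Fin L → Finset (Fin s)) (t : Fin L → ℕ) :
    ∀ r ∈ {r : ℝ | ∃ n : ℕ, 1 ≤ n ∧
      r = capBase (Fintype.card A) (HTcomp (A := A) t U n) / n},
      r ≤ (s : ℝ) - (advStrength t U : ℝ) := by
  rintro r ⟨n, hn, rfl⟩
  have hn0 : (0 : ℝ) < n := by exact_mod_cast hn
  obtain ⟨-, -, h3⟩ := chain_bounds hA U t n hn
  rw [div_le_iff₀ hn0]
  nlinarith

lemma sup_bounds (hA : 2 ≤ Fintype.card A)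
    (U : Fin L → Finset (Fin s)) (t : Fin L → ℕ) :
    capBase (Fintype.card A) (HT (A := A) t U)
        ≤ zeroCapBase (Fintype.card A) (HT (A := A) t U) ∧
    zeroCapBase (Fintype.card A) (HT (A := A) t U)
        ≤ HTcompCap A (Fintype.card A) t U ∧
    HTcompCap A (Fintype.card A) t U ≤ (s : ℝ) - (advStrength t U : ℝ) := by
  refine ⟨?_, ?_, ?_⟩
  · have h1 := (chain_bounds hA U t 1 (le_refl 1)).1
    rw [Nat.cast_one, one_mul] at h1
    refine h1.trans ?_
    have hmem : capBase (Fintype.card A) (chPow (HT (A := A) t U) 1) / (1 : ℕ) ∈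
        {r : ℝ | ∃ n : ℕ, 1 ≤ n ∧
          r = capBase (Fintype.card A) (chPow (HT (A := A) t U) n) / n} :=
      ⟨1, le_refl 1, rfl⟩
    have := le_csSup ⟨(s : ℝ) - (advStrength t U : ℝ), fun r hr => S1_bdd hA U t r hr⟩ hmem
    simpa [zeroCapBase] using this
  · refine csSup_le (S1_nonempty _ U t) ?_
    rintro r ⟨n, hn, rfl⟩
    have hn0 : (0 : ℝ) < n := by exact_mod_cast hn
    have h2 := (chain_bounds hA U t n hn).2.1
    have step : capBase (Fintype.card A) (chPow (HT (A := A) t U) n) / n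
        ≤ capBase (Fintype.card A) (HTcomp (A := A) t U n) / n := by gcongr
    refine step.trans ?_
    exact le_csSup ⟨(s : ℝ) - (advStrength t U : ℝ), fun r hr => S2_bdd hA U t r hr⟩
      ⟨n, hn, rfl⟩
  · exact csSup_le (S2_nonempty _ U t) (S2_bdd hA U t)

lemma all_eq_of_cap_eq (hA : 2 ≤ Fintype.card A)
    (U : Fin L → Finset (Fin s)) (t : Fin L → ℕ)
    (hcap : capBase (Fintype.card A) (HT (A := A) t U)
      = (s : ℝ) - (advStrength t U : ℝ)) :
    (∀ n : ℕ, 1 ≤ n →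
        (n : ℝ) * capBase (Fintype.card A) (HT (A := A) t U)
          = capBase (Fintype.card A) (chPow (HT (A := A) t U) n) ∧
        capBase (Fintype.card A) (chPow (HT (A := A) t U) n)
          = capBase (Fintype.card A) (HTcomp (A := A) t U n) ∧
        capBase (Fintype.card A) (HTcomp (A := A) t U n)
          = (n : ℝ) * ((s : ℝ) - (advStrength t U : ℝ))) ∧
      capBase (Fintype.card A) (HT (A := A) t U)
        = zeroCapBase (Fintype.card A) (HT (A := A) t U) ∧
      zeroCapBase (Fintype.card A) (HT (A := A) t U)
        = HTcompCap A (Fintype.card A) t U ∧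
      HTcompCap A (Fintype.card A) t U = (s : ℝ) - (advStrength t U : ℝ) := by
  have key : ∀ n : ℕ, 1 ≤ n →
      (n : ℝ) * capBase (Fintype.card A) (HT (A := A) t U)
        = capBase (Fintype.card A) (chPow (HT (A := A) t U) n) ∧
      capBase (Fintype.card A) (chPow (HT (A := A) t U) n)
        = capBase (Fintype.card A) (HTcomp (A := A) t U n) ∧
      capBase (Fintype.card A) (HTcomp (A := A) t U n)
        = (n : ℝ) * ((s : ℝ) - (advStrength t U : ℝ)) := by
    intro n hn
    obtain ⟨h1, h2, h3⟩ := chain_bounds hA U t n hn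
    rw [hcap] at h1
    exact ⟨by rw [hcap]; linarith, by linarith, by linarith⟩
  refine ⟨key, ?_, ?_, ?_⟩
  · rw [hcap]
    refine le_antisymm ?_ ?_
    · refine le_csSup ⟨(s : ℝ) - (advStrength t U : ℝ), fun r hr => S1_bdd hA U t r hr⟩
        (⟨1, le_refl 1, ?_⟩ :
          (s : ℝ) - (advStrength t U : ℝ) ∈ {r : ℝ | ∃ n : ℕ, 1 ≤ n ∧
            r = capBase (Fintype.card A) (chPow (HT (A := A) t U) n) / n})
      have := (key 1 (le_refl 1)).1
      rw [hcap] at this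
      rw [← this]
      simp
    · exact csSup_le (S1_nonempty _ U t) (S1_bdd hA U t)
  · refine le_antisymm ((sup_bounds hA U t).2.1) ?_
    refine csSup_le (S2_nonempty _ U t) ?_
    rintro r ⟨n, hn, rfl⟩
    have hn0 : (0 : ℝ) < n := by exact_mod_cast hn
    have h3 := (key n hn).2.2
    have : capBase (Fintype.card A) (HTcomp (A := A) t U n) / n
        = (s : ℝ) - (advStrength t U : ℝ) := by
      rw [h3]; field_simp
    rw [this, ← hcap]
    exact (sup_bounds hA U t).1
  · refine le_antisymm ((sup_bounds hA U t).2.2) ?_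
    refine le_csSup ⟨(s : ℝ) - (advStrength t U : ℝ), fun r hr => S2_bdd hA U t r hr⟩
      ⟨1, le_refl 1, ?_⟩
    have h3 := (key 1 (le_refl 1)).2.2
    rw [h3]
    simp

lemma cap_eq_of_field (F : Type) [Field F] [Fintype F] [DecidableEq F]
    (U : Fin L → Finset (Fin s)) (t : Fin L → ℕ) (hsF : s ≤ Fintype.card F) :
    capBase (Fintype.card F) (HT (A := F) t U)
      = (s : ℝ) - (advStrength t U : ℝ) := by
  have hA : 2 ≤ Fintype.card F := Fintype.one_lt_card
  have hq : (1 : ℝ) < (Fintype.card F : ℝ) := oneltq hA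
  have hσs := advStrength_le t U
  refine le_antisymm ?_ ?_
  · obtain ⟨h1, h2, h3⟩ := chain_bounds hA U t 1 (le_refl 1)
    rw [Nat.cast_one, one_mul] at h1 h3
    linarith
  · obtain ⟨C, hC, hcard⟩ := exists_good_code_HT F t U hsF
    have hle := le_maxGoodCode hC
    rw [hcard] at hle
    have := Real.logb_le_logb_of_le hq
      (x := ((Fintype.card F ^ (s - advStrength t U) : ℕ) : ℝ))
      (y := (maxGoodCode (HT (A := F) t U) : ℝ))
      (by positivity) (by exact_mod_cast hle)
    calc (s : ℝ) - (advStrength t U : ℝ)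
        = Real.logb (Fintype.card F) ((Fintype.card F ^ (s - advStrength t U) : ℕ) : ℝ) := by
          push_cast
          rw [Real.logb_pow, Real.logb_self_eq_one hq, Nat.cast_sub hσs]
          ring
      _ ≤ capBase (Fintype.card F) (HT (A := F) t U) := this

end Aux

/-- for `H = H_t⟨U⟩ = H_{t_1}⟨U_1⟩ ▸ ⋯ ▸ H_{t_L}⟨U_L⟩` (possibly
overlapping `U_ℓ`'s) and the adversarial strength `σ = σ_t⟨U⟩`, one has, for all `n ≥ 1`,
`n·C(H) ≤ C(H^n) ≤ C(H^{n,rest}) ≤ n·(s − σ)`; in particular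
`C(H) ≤ C0(H) ≤ C0_rest(H) ≤ s − σ`; moreover for all sufficiently large finite fields
(taken as the alphabet) all these inequalities are equalities. -/

theorem capBase_HT_bounds {A : Type*} [Fintype A] [DecidableEq A]
    (hA : 2 ≤ Fintype.card A) {s L : ℕ} (hs : 1 ≤ s) (hL : 1 ≤ L)
    (U : Fin L → Finset (Fin s)) (t : Fin L → ℕ) :
    ((∀ n : ℕ, 1 ≤ n →
        (n : ℝ) * capBase (Fintype.card A) (HT (A := A) t U)
          ≤ capBase (Fintype.card A) (chPow (HT (A := A) t U) n) ∧
        capBase (Fintype.card A) (chPow (HT (A := A) t U) n)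
          ≤ capBase (Fintype.card A) (HTcomp (A := A) t U n) ∧
        capBase (Fintype.card A) (HTcomp (A := A) t U n)
          ≤ (n : ℝ) * ((s : ℝ) - (advStrength t U : ℝ))) ∧
      capBase (Fintype.card A) (HT (A := A) t U)
        ≤ zeroCapBase (Fintype.card A) (HT (A := A) t U) ∧
      zeroCapBase (Fintype.card A) (HT (A := A) t U)
        ≤ HTcompCap A (Fintype.card A) t U ∧
      HTcompCap A (Fintype.card A) t U ≤ (s : ℝ) - (advStrength t U : ℝ)) ∧
    ∃ q0 : ℕ, ∀ (F : Type) [Field F] [Fintype F] [DecidableEq F],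
      q0 ≤ Fintype.card F →
      (∀ n : ℕ, 1 ≤ n →
        (n : ℝ) * capBase (Fintype.card F) (HT (A := F) t U)
          = capBase (Fintype.card F) (chPow (HT (A := F) t U) n) ∧
        capBase (Fintype.card F) (chPow (HT (A := F) t U) n)
          = capBase (Fintype.card F) (HTcomp (A := F) t U n) ∧
        capBase (Fintype.card F) (HTcomp (A := F) t U n)
          = (n : ℝ) * ((s : ℝ) - (advStrength t U : ℝ))) ∧
      capBase (Fintype.card F) (HT (A := F) t U)
        = zeroCapBase (Fintype.card F) (HT (A := F) t U) ∧
      zeroCapBase (Fintype.card F) (HT (A := F) t U)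
        = HTcompCap F (Fintype.card F) t U ∧
      HTcompCap F (Fintype.card F) t U = (s : ℝ) - (advStrength t U : ℝ) := by
  constructor
  · exact ⟨fun n hn => chain_bounds hA U t n hn, sup_bounds hA U t⟩
  · refine ⟨s, fun F _ _ _ hsF => ?_⟩
    exact all_eq_of_cap_eq Fintype.one_lt_card U t (cap_eq_of_field F U t hsF)
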